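/- arXiv:2007.04876 — 3 statements merged into one kernel-verified Lean document; each statement's English description precedes it below -/
import Mathlib

section
/- Let θ* = F(v) = max_{S ⊆ [N], |S| ≤ K} R(S, v). Then every subset S ⊆ [N] with |S| ≤ K that maximizes Σ_{i∈S} v_i(r_i − θ*) over all subsets of cardinality at most K satisfies R(S, v) = θ*; that is, θ* is a fixed point: G(θ*) = θ*, where G(θ) denotes the revenue R(S_θ, v) of a maximizer S_θ of Σ_{i∈S} v_i(r_i − θ). -/
/-- Expected revenue of assortment `S` under the MNL model with rewards `r`
and preference weights `v`. -/
noncomputable def Rev {N : ℕ} (r v : Fin N → ℝ) (S : Finset (Fin N)) : ℝ :=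
  (∑ i ∈ S, r i * v i) / (1 + ∑ i ∈ S, v i)

/-- The optimal expected revenue `F(v) = max_{S ⊆ [N], |S| ≤ K} R(S, v)`. -/
noncomputable def Fopt (N K : ℕ) (r v : Fin N → ℝ) : ℝ :=
  Finset.sup'
    ((Finset.univ : Finset (Fin N)).powerset.filter fun S => S.card ≤ K)
    ⟨∅, by simp⟩ (Rev r v)

/-!
Since the denominator `1 + ∑_{i ∈ S} v i` is positive, `θ ≤ R(S, v)` holds exactly when
`θ ≤ ∑_{i ∈ S} v i (r i - θ)`. An assortment attaining `θ* = F(v)` therefore has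
`∑ v i (r i - θ*) ≥ θ*`, so does every maximizer `S` of that sum, hence `R(S, v) ≥ θ*`;
the reverse inequality holds because `S` is feasible.
-/

section

variable {N : ℕ} (r v : Fin N → ℝ)

theorem le_Rev_iff_le_sum_mul_sub (hv : ∀ i, 0 ≤ v i) (θ : ℝ) (T : Finset (Fin N)) :
    θ ≤ Rev r v T ↔ θ ≤ ∑ i ∈ T, v i * (r i - θ) := by
  have hden : 0 < 1 + ∑ i ∈ T, v i := by
    linarith [Finset.sum_nonneg fun i (_ : i ∈ T) => hv i]
  have hsum : ∑ i ∈ T, v i * (r i - θ) = ∑ i ∈ T, r i * v i - θ * ∑ i ∈ T, v i := by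
    rw [Finset.mul_sum, ← Finset.sum_sub_distrib]
    exact Finset.sum_congr rfl fun i _ => by ring
  rw [Rev, le_div_iff₀ hden, hsum]
  constructor <;> intro h <;> linarith

theorem Rev_le_Fopt {K : ℕ} {T : Finset (Fin N)} (hT : T.card ≤ K) :
    Rev r v T ≤ Fopt N K r v :=
  Finset.le_sup' (Rev r v) (by simp [hT])

theorem exists_Rev_eq_Fopt (K : ℕ) :
    ∃ T : Finset (Fin N), T.card ≤ K ∧ Rev r v T = Fopt N K r v := by
  obtain ⟨T, hT, hmax⟩ := Finset.exists_mem_eq_sup' (⟨∅, by simp⟩ :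
    ((Finset.univ : Finset (Fin N)).powerset.filter fun S => S.card ≤ K).Nonempty) (Rev r v)
  exact ⟨T, (Finset.mem_filter.mp hT).2, hmax.symm⟩

end

theorem Fopt_is_fixed_point_general
    (N K : ℕ)
    (r v : Fin N → ℝ) (hv : ∀ i, 0 ≤ v i)
    (θstar : ℝ) (hθstar : θstar = Fopt N K r v)
    (S : Finset (Fin N)) (hScard : S.card ≤ K)
    (hSopt : ∀ S' : Finset (Fin N), S'.card ≤ K →
      (∑ i ∈ S', v i * (r i - θstar)) ≤ ∑ i ∈ S, v i * (r i - θstar)) :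
    Rev r v S = θstar := by
  subst hθstar
  obtain ⟨S₀, hS₀card, hS₀⟩ := exists_Rev_eq_Fopt r v K
  have hS₀sum := (le_Rev_iff_le_sum_mul_sub r v hv _ S₀).mp hS₀.ge
  have hSrev := (le_Rev_iff_le_sum_mul_sub r v hv _ S).mpr (hS₀sum.trans (hSopt S₀ hS₀card))
  exact (Rev_le_Fopt r v hScard).antisymm hSrev

/-- `θ* = F(v)` is a fixed point: every feasible maximizer of
`∑_{i ∈ S} v i * (r i - θ*)` has revenue exactly `θ*`. -/
theorem Fopt_is_fixed_point
    (N K : ℕ) (hN : 1 ≤ N) (hK1 : 1 ≤ K) (hKN : K ≤ N)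
    (r v : Fin N → ℝ) (hr : ∀ i, 0 ≤ r i ∧ r i ≤ 1) (hv : ∀ i, 0 ≤ v i)
    (θstar : ℝ) (hθstar : θstar = Fopt N K r v)
    (S : Finset (Fin N)) (hScard : S.card ≤ K)
    (hSopt : ∀ S' : Finset (Fin N), S'.card ≤ K →
      (∑ i ∈ S', v i * (r i - θstar)) ≤ ∑ i ∈ S, v i * (r i - θstar)) :
    Rev r v S = θstar :=
  Fopt_is_fixed_point_general N K r v hv θstar hθstar S hScard hSopt
end

section
/- Let θ* = F(v) = max_{S ⊆ [N], |S| ≤ K} R(S, v) and let θ ∈ ℝ with θ < θ*. Then every subset S_θ ⊆ [N] with |S_θ| ≤ K that maximizes Σ_{i∈S} v_i(r_i − θ) over all subsets of cardinality at most K satisfies R(S_θ, v) > θ. -/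
/-! Clearing the positive denominator `1 + ∑ v`, the revenue of `S` exceeds `θ` exactly when
the `θ`-adjusted weight `∑_{i ∈ S} v i (r i - θ)` exceeds `θ`. An optimal assortment has
revenue `θ* > θ`, so its adjusted weight exceeds `θ`; a maximizer `S_θ` of the adjusted weight
does at least as well, hence `R(S_θ) > θ`. -/

open Finset

theorem sum_mul_sub_eq {ι : Type*} (S : Finset ι) (r v : ι → ℝ) (θ : ℝ) :
    ∑ i ∈ S, v i * (r i - θ) = ∑ i ∈ S, r i * v i - θ * ∑ i ∈ S, v i := by
  rw [mul_sum, ← sum_sub_distrib]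
  exact sum_congr rfl fun i _ => by ring

theorem lt_rev_iff_lt_sum {N : ℕ} {r v : Fin N → ℝ} {S : Finset (Fin N)}
    (hv : ∀ i ∈ S, 0 ≤ v i) (θ : ℝ) :
    θ < Rev r v S ↔ θ < ∑ i ∈ S, v i * (r i - θ) := by
  have hden : 0 < 1 + ∑ i ∈ S, v i := by linarith [sum_nonneg hv]
  rw [Rev, lt_div_iff₀ hden, sum_mul_sub_eq]
  constructor <;> intro h <;> linarith

theorem exists_rev_eq_fopt (N K : ℕ) (r v : Fin N → ℝ) :
    ∃ S : Finset (Fin N), S.card ≤ K ∧ Rev r v S = Fopt N K r v := by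
  obtain ⟨S, hS, hmax⟩ := exists_mem_eq_sup' (⟨∅, by simp⟩ :
    ((univ : Finset (Fin N)).powerset.filter fun S => S.card ≤ K).Nonempty) (Rev r v)
  exact ⟨S, (mem_filter.mp hS).2, hmax.symm⟩

theorem below_fixed_point_general
    (N K : ℕ)
    (r v : Fin N → ℝ) (hv : ∀ i, 0 ≤ v i)
    (θstar : ℝ) (hθstar : θstar = Fopt N K r v)
    (θ : ℝ) (hθ : θ < θstar)
    (Sθ : Finset (Fin N))
    (hSopt : ∀ S' : Finset (Fin N), S'.card ≤ K →
      (∑ i ∈ S', v i * (r i - θ)) ≤ ∑ i ∈ Sθ, v i * (r i - θ)) :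
    θ < Rev r v Sθ := by
  obtain ⟨Sstar, hcard, hSstar⟩ := exists_rev_eq_fopt N K r v
  have hstar : θ < ∑ i ∈ Sstar, v i * (r i - θ) :=
    (lt_rev_iff_lt_sum (fun i _ => hv i) θ).mp (hSstar ▸ hθstar ▸ hθ)
  exact (lt_rev_iff_lt_sum (fun i _ => hv i) θ).mpr (hstar.trans_le (hSopt Sstar hcard))

/-- if `θ < θ* = F(v)`, every feasible maximizer `S_θ` of
`∑_{i ∈ S} v i * (r i - θ)` satisfies `R(S_θ, v) > θ`. -/
theorem below_fixed_point
    (N K : ℕ) (hN : 1 ≤ N) (hK1 : 1 ≤ K) (hKN : K ≤ N)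
    (r v : Fin N → ℝ) (hr : ∀ i, 0 ≤ r i ∧ r i ≤ 1) (hv : ∀ i, 0 ≤ v i)
    (θstar : ℝ) (hθstar : θstar = Fopt N K r v)
    (θ : ℝ) (hθ : θ < θstar)
    (Sθ : Finset (Fin N)) (hScard : Sθ.card ≤ K)
    (hSopt : ∀ S' : Finset (Fin N), S'.card ≤ K →
      (∑ i ∈ S', v i * (r i - θ)) ≤ ∑ i ∈ Sθ, v i * (r i - θ)) :
    θ < Rev r v Sθ :=
  below_fixed_point_general N K r v hv θstar hθstar θ hθ Sθ hSopt
end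

section
/- Let θ* = F(v) = max_{S ⊆ [N], |S| ≤ K} R(S, v). If θ ∈ ℝ is such that some subset S_θ ⊆ [N] with |S_θ| ≤ K maximizing Σ_{i∈S} v_i(r_i − θ) over all subsets of cardinality at most K satisfies R(S_θ, v) = θ, then θ = θ*; that is, θ* is the unique fixed point of θ ↦ R(S_θ, v). -/
lemma one_add_sum_pos {ι : Type*} {v : ι → ℝ} (hv : ∀ i, 0 ≤ v i) (S : Finset ι) :
    0 < 1 + ∑ i ∈ S, v i :=
  add_pos_of_pos_of_nonneg one_pos (Finset.sum_nonneg fun i _ => hv i)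

section Revenue

variable {N : ℕ} {r v : Fin N → ℝ}

lemma sum_mul_sub_sub_eq (hv : ∀ i, 0 ≤ v i) (S : Finset (Fin N)) (θ : ℝ) :
    ∑ i ∈ S, v i * (r i - θ) - θ = (1 + ∑ i ∈ S, v i) * (Rev r v S - θ) := by
  have hden := (one_add_sum_pos hv S).ne'
  unfold Rev
  rw [mul_sub, mul_div_cancel₀ _ hden, Finset.sum_congr rfl fun i _ => mul_sub (v i) (r i) θ,
    Finset.sum_sub_distrib, ← Finset.sum_mul]
  simp only [mul_comm (v _)]
  ring

lemma sum_mul_sub_eq_of_rev_eq (hv : ∀ i, 0 ≤ v i) {S : Finset (Fin N)} {θ : ℝ}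
    (h : Rev r v S = θ) : ∑ i ∈ S, v i * (r i - θ) = θ := by
  have := sum_mul_sub_sub_eq (r := r) hv S θ
  rw [h, sub_self, mul_zero] at this
  linarith

lemma rev_le_of_sum_mul_sub_le (hv : ∀ i, 0 ≤ v i) {S : Finset (Fin N)} {θ : ℝ}
    (h : ∑ i ∈ S, v i * (r i - θ) ≤ θ) : Rev r v S ≤ θ := by
  have key := sum_mul_sub_sub_eq (r := r) hv S θ
  have : (1 + ∑ i ∈ S, v i) * (Rev r v S - θ) ≤ 0 := by linarith
  have := nonpos_of_mul_nonpos_right this (one_add_sum_pos hv S)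
  linarith

end Revenue

lemma fopt_eq_of_forall_rev_le {N K : ℕ} {r v : Fin N → ℝ} {S : Finset (Fin N)}
    (hS : S.card ≤ K) (hmax : ∀ S' : Finset (Fin N), S'.card ≤ K → Rev r v S' ≤ Rev r v S) :
    Fopt N K r v = Rev r v S :=
  le_antisymm
    (Finset.sup'_le _ _ fun S' hS' => hmax S' (Finset.mem_filter.mp hS').2)
    (Finset.le_sup' (Rev r v) (Finset.mem_filter.mpr ⟨Finset.mem_powerset.mpr S.subset_univ, hS⟩))

theorem fixed_point_unique_general
    (N K : ℕ)
    (r v : Fin N → ℝ) (hv : ∀ i, 0 ≤ v i)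
    (θstar : ℝ) (hθstar : θstar = Fopt N K r v)
    (θ : ℝ)
    (Sθ : Finset (Fin N)) (hScard : Sθ.card ≤ K)
    (hSopt : ∀ S' : Finset (Fin N), S'.card ≤ K →
      (∑ i ∈ S', v i * (r i - θ)) ≤ ∑ i ∈ Sθ, v i * (r i - θ))
    (hfix : Rev r v Sθ = θ) :
    θ = θstar := by
  have hvalue : ∑ i ∈ Sθ, v i * (r i - θ) = θ := sum_mul_sub_eq_of_rev_eq hv hfix
  have hmax : ∀ S' : Finset (Fin N), S'.card ≤ K → Rev r v S' ≤ Rev r v Sθ := fun S' hS' =>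
    hfix ▸ rev_le_of_sum_mul_sub_le hv ((hSopt S' hS').trans hvalue.le)
  rw [hθstar, fopt_eq_of_forall_rev_le hScard hmax, hfix]

/-- `θ* = F(v)` is the unique fixed point of `θ ↦ R(S_θ, v)`. -/
theorem fixed_point_unique
    (N K : ℕ) (hN : 1 ≤ N) (hK1 : 1 ≤ K) (hKN : K ≤ N)
    (r v : Fin N → ℝ) (hr : ∀ i, 0 ≤ r i ∧ r i ≤ 1) (hv : ∀ i, 0 ≤ v i)
    (θstar : ℝ) (hθstar : θstar = Fopt N K r v)
    (θ : ℝ)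
    (Sθ : Finset (Fin N)) (hScard : Sθ.card ≤ K)
    (hSopt : ∀ S' : Finset (Fin N), S'.card ≤ K →
      (∑ i ∈ S', v i * (r i - θ)) ≤ ∑ i ∈ Sθ, v i * (r i - θ))
    (hfix : Rev r v Sθ = θ) :
    θ = θstar :=
  fixed_point_unique_general N K r v hv θstar hθstar θ Sθ hScard hSopt hfix
end
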